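/- Let V be a finite-dimensional complex inner product space, let H₁ and H₂ be self-adjoint linear operators on V, and let L ⊆ V be a nonzero subspace. Assume: (i) H₂ v = 0 for every v ∈ L; (ii) there is a real δ with ⟪v, H₂ v⟫ ≥ δ·‖v‖² for every v in the orthogonal complement L⊥; (iii) δ > 2·‖H₁‖, where ‖H₁‖ is the operator norm of H₁; and (iv) L is invariant under H₁ (H₁ maps L into L). Then the smallest eigenvalue of H₁ + H₂ equals the minimum of the Rayleigh quotient ⟪v, H₁ v⟫ over unit vectors v ∈ L, i.e. λ(H₁ + H₂) = λ(H₁|_L). -/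

import Mathlib

/-! Split `v = s + t` with `s ∈ L`, `t ∈ Lᗮ`. Because `H₁ + H₂` is self-adjoint and maps `s`
into `L`, the cross terms vanish, so `⟪v, (H₁ + H₂) v⟫ = ⟪s, H₁ s⟫ + ⟪t, H₁ t⟫ + ⟪t, H₂ t⟫`.
The first term is at least `λ(H₁|_L) ‖s‖²`, the other two at least `(δ - ‖H₁‖) ‖t‖² ≥ ‖H₁‖ ‖t‖²`,
and `λ(H₁|_L) ≤ ‖H₁‖`; hence the sum is at least `λ(H₁|_L)`. The reverse inequality holds
because `H₂` vanishes on `L`. -/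

/-- The infimum of the Rayleigh quotient `re ⟪v, A v⟫` of the operator `A` over
unit vectors `v` in the set `S`.  For a self-adjoint operator on a nonzero
finite-dimensional complex inner product space and `S = Set.univ`, this is the
smallest eigenvalue `λ(A)`; for a subspace `S = L`, this is `λ(A|_L)`. -/
noncomputable def rayleighInf {V : Type*} [NormedAddCommGroup V] [InnerProductSpace ℂ V]
    (A : V →L[ℂ] V) (S : Set V) : ℝ :=
  sInf ((fun v => (inner ℂ v (A v) : ℂ).re) '' {v | v ∈ S ∧ ‖v‖ = 1})

section RCLike

variable {𝕜 E : Type*} [RCLike 𝕜] [NormedAddCommGroup E] [InnerProductSpace 𝕜 E]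

theorem Submodule.exists_mem_norm_eq_one {L : Submodule 𝕜 E} (hL : L ≠ ⊥) :
    ∃ u ∈ L, ‖u‖ = 1 :=
  let ⟨x, hxL, hx⟩ := L.ne_bot_iff.mp hL
  ⟨(‖x‖⁻¹ : 𝕜) • x, L.smul_mem _ hxL, norm_smul_inv_norm hx⟩

theorem ContinuousLinearMap.abs_re_inner_self_apply_le (A : E →L[𝕜] E) (v : E) :
    |RCLike.re (inner 𝕜 v (A v))| ≤ ‖A‖ * ‖v‖ ^ 2 :=
  calc _ ≤ ‖inner 𝕜 v (A v)‖ := RCLike.abs_re_le_norm _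
    _ ≤ ‖v‖ * (‖A‖ * ‖v‖) := by grw [norm_inner_le_norm, A.le_opNorm]
    _ = ‖A‖ * ‖v‖ ^ 2 := by ring

theorem LinearMap.re_inner_smul_apply_smul (A : E →ₗ[𝕜] E) (c : 𝕜) (v : E) :
    RCLike.re (inner 𝕜 (c • v) (A (c • v))) = ‖c‖ ^ 2 * RCLike.re (inner 𝕜 v (A v)) := by
  rw [map_smul, inner_smul_left, inner_smul_right, ← mul_assoc, RCLike.conj_mul,
    ← RCLike.ofReal_pow, RCLike.re_ofReal_mul]

theorem LinearMap.IsSymmetric.inner_add_apply_add_of_mem_orthogonal {A : E →ₗ[𝕜] E}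
    (hA : A.IsSymmetric) {K : Submodule 𝕜 E} {s t : E} (hs : A s ∈ K) (ht : t ∈ Kᗮ) :
    inner 𝕜 (s + t) (A (s + t)) = inner 𝕜 s (A s) + inner 𝕜 t (A t) := by
  have hts : inner 𝕜 t (A s) = 0 := K.inner_left_of_mem_orthogonal hs ht
  have hst : inner 𝕜 s (A t) = 0 := by
    rw [← hA]; exact K.inner_right_of_mem_orthogonal hs ht
  simp only [map_add, inner_add_left, inner_add_right, hts, hst]
  ring

end RCLike

section rayleighInf

variable {V : Type*} [NormedAddCommGroup V] [InnerProductSpace ℂ V] {A : V →L[ℂ] V} {S : Set V}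

theorem bddBelow_re_inner_self_apply_image_sphere (A : V →L[ℂ] V) (S : Set V) :
    BddBelow ((fun v => (inner ℂ v (A v)).re) '' {v | v ∈ S ∧ ‖v‖ = 1}) := by
  refine ⟨-‖A‖, ?_⟩
  rintro _ ⟨v, ⟨-, hv⟩, rfl⟩
  have := A.abs_re_inner_self_apply_le v
  rw [hv, one_pow, mul_one] at this
  exact neg_le_of_abs_le this

theorem rayleighInf_le {v : V} (hv : v ∈ S) (hv1 : ‖v‖ = 1) :
    rayleighInf A S ≤ (inner ℂ v (A v)).re :=
  csInf_le (bddBelow_re_inner_self_apply_image_sphere A S) ⟨v, ⟨hv, hv1⟩, rfl⟩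

theorem le_rayleighInf {c : ℝ} (hS : ∃ u ∈ S, ‖u‖ = 1)
    (h : ∀ v ∈ S, ‖v‖ = 1 → c ≤ (inner ℂ v (A v)).re) : c ≤ rayleighInf A S := by
  obtain ⟨u, hu, hu1⟩ := hS
  refine le_csInf ⟨_, u, ⟨hu, hu1⟩, rfl⟩ ?_
  rintro _ ⟨v, ⟨hv, hv1⟩, rfl⟩
  exact h v hv hv1

theorem rayleighInf_le_opNorm {u : V} (hu : u ∈ S) (hu1 : ‖u‖ = 1) : rayleighInf A S ≤ ‖A‖ := by
  have := A.abs_re_inner_self_apply_le u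
  rw [hu1, one_pow, mul_one] at this
  exact (rayleighInf_le hu hu1).trans (le_of_abs_le this)

theorem rayleighInf_mul_norm_sq_le {L : Submodule ℂ V} {s : V} (hs : s ∈ L) :
    rayleighInf A L * ‖s‖ ^ 2 ≤ (inner ℂ s (A s)).re := by
  rcases eq_or_ne s 0 with rfl | hs0
  · simp
  have h := rayleighInf_le (A := A) (L.smul_mem (‖s‖⁻¹ : ℂ) hs) (norm_smul_inv_norm hs0)
  rw [← RCLike.re_to_complex, ← A.coe_coe, LinearMap.re_inner_smul_apply_smul, A.coe_coe,
    RCLike.re_to_complex, norm_inv, Complex.norm_real,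
    norm_norm, inv_pow, ← div_eq_inv_mul, le_div_iff₀ (by positivity)] at h
  exact h

end rayleighInf

theorem projection_lemma_strict_equality
    {V : Type*} [NormedAddCommGroup V] [InnerProductSpace ℂ V] [FiniteDimensional ℂ V]
    (H₁ H₂ : V →L[ℂ] V) (hH₁ : IsSelfAdjoint H₁) (hH₂ : IsSelfAdjoint H₂)
    (L : Submodule ℂ V) (hL : L ≠ ⊥)
    (hker : ∀ v ∈ L, H₂ v = 0)
    (δ : ℝ)
    (hgap : ∀ v ∈ Lᗮ, δ * ‖v‖ ^ 2 ≤ (inner ℂ v (H₂ v) : ℂ).re)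
    (hδ : 2 * ‖H₁‖ < δ)
    (hinv : ∀ v ∈ L, H₁ v ∈ L) :
    rayleighInf (H₁ + H₂) Set.univ = rayleighInf H₁ (L : Set V) := by
  obtain ⟨u, huL, hu1⟩ := L.exists_mem_norm_eq_one hL
  apply le_antisymm
  · refine le_rayleighInf ⟨u, huL, hu1⟩ fun v hvL hv1 => ?_
    simpa [hker v hvL] using rayleighInf_le (A := H₁ + H₂) (Set.mem_univ v) hv1
  refine le_rayleighInf ⟨u, trivial, hu1⟩ fun v _ hv1 => ?_
  obtain ⟨s, hs, t, ht, rfl⟩ := L.exists_add_mem_mem_orthogonal v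
  have hsplit : inner ℂ (s + t) ((H₁ + H₂) (s + t))
      = inner ℂ s (H₁ s) + (inner ℂ t (H₁ t) + inner ℂ t (H₂ t)) := by
    have h := (hH₁.add hH₂).isSymmetric.inner_add_apply_add_of_mem_orthogonal (s := s)
      (by simpa [hker s hs] using hinv s hs) ht
    rw [ContinuousLinearMap.coe_coe] at h
    rw [h, add_apply, add_apply, hker s hs, add_zero, inner_add_right]
  have hnorm : ‖s‖ ^ 2 + ‖t‖ ^ 2 = 1 := by
    have h := norm_add_sq_eq_norm_sq_add_norm_sq_of_inner_eq_zero s t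
      (L.inner_right_of_mem_orthogonal hs ht)
    rw [hv1, mul_one, ← sq, ← sq] at h
    exact h.symm
  have hm := rayleighInf_le_opNorm (A := H₁) huL hu1
  have ht₁ := neg_le_of_abs_le (H₁.abs_re_inner_self_apply_le t)
  rw [RCLike.re_to_complex] at ht₁
  calc rayleighInf H₁ L = rayleighInf H₁ L * ‖s‖ ^ 2 + rayleighInf H₁ L * ‖t‖ ^ 2 := by
        rw [← mul_add, hnorm, mul_one]
    _ ≤ rayleighInf H₁ L * ‖s‖ ^ 2 + (δ - ‖H₁‖) * ‖t‖ ^ 2 := by gcongr; linarith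
    _ ≤ (inner ℂ s (H₁ s)).re + ((inner ℂ t (H₁ t)).re + (inner ℂ t (H₂ t)).re) :=
        add_le_add (rayleighInf_mul_norm_sq_le hs) (by linarith [hgap t ht])
    _ = (inner ℂ (s + t) ((H₁ + H₂) (s + t))).re := by rw [hsplit, Complex.add_re, Complex.add_re]
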